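/- Let G = (V, E, w) be a weighted graph, Δ > 0, and N ⊆ V a set of centers such that every v ∈ V has some x ∈ N with d_G(v, x) ≤ Δ; for each v ∈ V set τ_v = |B_G(v, 3Δ) ∩ N|. Then for every parameter λ ≥ 2 there exists a probability distribution D over partitions of V such that every partition in the support of D is strongly 4Δ-bounded, and for every v ∈ V and every 0 < γ < 1/4, Pr_{P∼D}[B_G(v, γΔ) ⊄ P(v)] ≤ (1 − e^{-2γλ}) · (1 + τ_v/(e^{λ} − 1)), where P(v) denotes the cluster of P containing v. -/

import Mathlib

open MeasureTheory

namespace Pad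

variable {V : Type*}

/-- The weight of a walk: the sum of the weights of its edges. -/
def walkWeight (w : Sym2 V → ℝ) {G : SimpleGraph V} {u v : V} (p : G.Walk u v) : ℝ :=
  (p.darts.map fun d => w d.edge).sum

/-- Shortest-path distance in the weighted graph `(G, w)`. -/
noncomputable def wdist (w : Sym2 V → ℝ) (G : SimpleGraph V) (u v : V) : ℝ :=
  sInf {x | ∃ p : G.Walk u v, x = walkWeight w p}

/-- Distance from a vertex to a set of vertices. -/
noncomputable def wdistSet (w : Sym2 V → ℝ) (G : SimpleGraph V) (v : V) (A : Set V) : ℝ :=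
  sInf {x | ∃ a ∈ A, x = wdist w G v a}

/-- The closed ball of radius `r` around `v`. -/
def ball (w : Sym2 V → ℝ) (G : SimpleGraph V) (v : V) (r : ℝ) : Set V :=
  {u | wdist w G v u ≤ r}

/-- Weight of a walk of an induced subgraph, measured with the weights of `G`. -/
def walkWeightI (w : Sym2 V → ℝ) {G : SimpleGraph V} {C : Set V} {u v : C}
    (p : (G.induce C).Walk u v) : ℝ :=
  (p.darts.map fun d => w (Sym2.map Subtype.val d.edge)).sum

/-- The cluster `C` has strong diameter at most `Δ`: every two vertices of `C` are joined,
inside the induced subgraph `G[C]`, by a walk of weight at most `Δ`. -/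
def StronglyBounded (w : Sym2 V → ℝ) (G : SimpleGraph V) (C : Set V) (Δ : ℝ) : Prop :=
  ∀ u v : C, ∃ p : (G.induce C).Walk u v, walkWeightI w p ≤ Δ

/-- A partition of `V`, given by the map `cl` sending a vertex to its cluster. -/
structure Partition (V : Type*) where
  cl : V → Set V
  mem_cl : ∀ v, v ∈ cl v
  cl_eq : ∀ u v, u ∈ cl v → cl u = cl v

/-- A partition is strongly `Δ`-bounded if each of its clusters has strong diameter at most `Δ`. -/
def Partition.StronglyBounded (w : Sym2 V → ℝ) (G : SimpleGraph V) (P : Partition V)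
    (Δ : ℝ) : Prop :=
  ∀ v : V, Pad.StronglyBounded w G (P.cl v) Δ

/-- `(G, w)` has doubling dimension `ddim`: every ball of radius `2r` can be covered by
`2 ^ ddim` balls of radius `r`. -/
def Doubling (w : Sym2 V → ℝ) (G : SimpleGraph V) (ddim : ℝ) : Prop :=
  ∀ (x : V) (r : ℝ), 0 < r → ∃ T : Set V, T.Finite ∧ ((T.ncard : ℝ) ≤ (2 : ℝ) ^ ddim) ∧
    ball w G x (2 * r) ⊆ ⋃ y ∈ T, ball w G y r

/-- `G` has the complete graph `K_r` as a minor: there are `r` pairwise disjoint connected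
branch sets with an edge of `G` between any two of them. -/
def HasCliqueMinor (G : SimpleGraph V) (r : ℕ) : Prop :=
  ∃ B : Fin r → Set V,
    (∀ i, (G.induce (B i)).Connected) ∧
    (Pairwise fun i j => Disjoint (B i) (B j)) ∧
    ∀ i j : Fin r, i ≠ j → ∃ u ∈ B i, ∃ v ∈ B j, G.Adj u v

/-- A shortest path: a path whose weight equals the distance between its endpoints. -/
def IsShortestPath (w : Sym2 V → ℝ) (G : SimpleGraph V) {u v : V} (p : G.Walk u v) : Prop :=
  p.IsPath ∧ walkWeight w p = wdist w G u v

/-- `G` has an `r`-core with radius `Δ`: there are at most `r` shortest paths such that every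
vertex is within distance `Δ` of their union. -/
def HasCore (w : Sym2 V → ℝ) (G : SimpleGraph V) (r : ℕ) (Δ : ℝ) : Prop :=
  ∃ r' : ℕ, r' ≤ r ∧ ∃ (a b : Fin r' → V) (p : ∀ i, G.Walk (a i) (b i)),
    (∀ i, IsShortestPath w G (p i)) ∧
    ∀ v : V, ∃ i, ∃ u ∈ (p i).support, wdist w G v u ≤ Δ

end Pad

/-!
Shift every center `x ∈ N` by an independent `ω x`, exponential of rate `λ/Δ` conditioned on
`[0, Δ]`, and send each vertex `u` to the center minimising `d(u, x) - ω x` (ties broken by a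
fixed order). All vertices of a shortest path from `u` to its center keep that center, and this
path has length at most `2Δ`; hence clusters have strong diameter at most `4Δ`.

The ball `B(v, γΔ)` stays inside one cluster as soon as some center of `B(v, 3Δ)` beats every
other one by `2γΔ` in the score `ω x - d(v, x)`. Conditioning on the other shifts, memorylessness
turns "`x` has the best score" into "`x` wins by `2γΔ`" at the price of a factor `e^{-2γλ}` and an
additive truncation error `(1 - e^{-2γλ})/(e^λ - 1)`; summing over the `τ_v` candidates gives the
bound.
-/

namespace Pad

open SimpleGraph

section Metric

variable {V : Type*} {G : SimpleGraph V} {w : Sym2 V → ℝ}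

lemma walkWeight_nonneg (hw : ∀ e, 0 ≤ w e) {u v : V} (p : G.Walk u v) :
    0 ≤ walkWeight w p :=
  List.sum_nonneg (by simp [hw])

lemma walkWeight_append {u v x : V} (p : G.Walk u v) (q : G.Walk v x) :
    walkWeight w (p.append q) = walkWeight w p + walkWeight w q := by
  simp [walkWeight, Walk.darts_append]

lemma walkWeight_reverse {u v : V} (p : G.Walk u v) :
    walkWeight w p.reverse = walkWeight w p := by
  simp [walkWeight, Walk.darts_reverse, List.sum_reverse, Function.comp_def]

lemma walkWeight_copy {u v u' v' : V} (p : G.Walk u v) (hu : u = u') (hv : v = v') :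
    walkWeight w (p.copy hu hv) = walkWeight w p := by
  subst hu hv; rfl

lemma walkWeight_bypass_le [DecidableEq V] (hw : ∀ e, 0 ≤ w e) {u v : V} (p : G.Walk u v) :
    walkWeight w p.bypass ≤ walkWeight w p :=
  (p.darts_bypass_sublist_darts.map _).sum_le_sum (by simp [hw])

lemma wdist_le_walkWeight (hw : ∀ e, 0 ≤ w e) {u v : V} (p : G.Walk u v) :
    wdist w G u v ≤ walkWeight w p :=
  csInf_le ⟨0, by rintro _ ⟨q, rfl⟩; exact walkWeight_nonneg hw q⟩ ⟨p, rfl⟩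

lemma walkWeightI_induce {C : Set V} {u v : V} (p : G.Walk u v) (hp : ∀ y ∈ p.support, y ∈ C) :
    walkWeightI w (p.induce C hp) = walkWeight w p := by
  induction p with
  | nil => rfl
  | cons h p ih =>
    simp only [walkWeightI, walkWeight, Walk.induce_cons, Walk.darts_cons, List.map_cons,
      List.sum_cons] at ih ⊢
    rw [ih]
    rfl

lemma wdist_add_wdist_le_of_mem_support (hw : ∀ e, 0 ≤ w e) {u x : V} {p : G.Walk u x}
    (hp : walkWeight w p = wdist w G u x) {y : V} (hy : y ∈ p.support) :
    wdist w G u y + wdist w G y x ≤ wdist w G u x := by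
  classical
  rw [← hp, ← p.take_spec hy, walkWeight_append]
  exact add_le_add (wdist_le_walkWeight hw _) (wdist_le_walkWeight hw _)

variable [Finite V]

lemma exists_walkWeight_eq_wdist (hw : ∀ e, 0 ≤ w e) {u v : V} (h : G.Reachable u v) :
    ∃ p : G.Walk u v, walkWeight w p = wdist w G u v := by
  classical
  have := Fintype.ofFinite V
  obtain ⟨p, -, hp⟩ := Finset.exists_min_image Finset.univ
    (fun p : G.Path u v => walkWeight w (p : G.Walk u v)) ⟨h.some.toPath, Finset.mem_univ _⟩
  refine ⟨p, le_antisymm (le_csInf ⟨_, p, rfl⟩ ?_) (wdist_le_walkWeight hw _)⟩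
  rintro _ ⟨q, rfl⟩
  exact (hp q.toPath (Finset.mem_univ _)).trans (walkWeight_bypass_le hw q)

lemma wdist_self (hw : ∀ e, 0 ≤ w e) (u : V) : wdist w G u u = 0 := by
  obtain ⟨p, hp⟩ := exists_walkWeight_eq_wdist (G := G) hw (Reachable.refl u)
  exact le_antisymm (wdist_le_walkWeight hw Walk.nil) (hp ▸ walkWeight_nonneg hw p)

lemma wdist_comm (hw : ∀ e, 0 ≤ w e) (hG : G.Preconnected) (u v : V) :
    wdist w G u v = wdist w G v u := by
  suffices ∀ a b, wdist w G a b ≤ wdist w G b a from le_antisymm (this u v) (this v u)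
  intro a b
  obtain ⟨p, hp⟩ := exists_walkWeight_eq_wdist hw (hG b a)
  rw [← hp, ← walkWeight_reverse]
  exact wdist_le_walkWeight hw _

lemma wdist_triangle (hw : ∀ e, 0 ≤ w e) (hG : G.Preconnected) (u v x : V) :
    wdist w G u x ≤ wdist w G u v + wdist w G v x := by
  obtain ⟨p, hp⟩ := exists_walkWeight_eq_wdist hw (hG u v)
  obtain ⟨q, hq⟩ := exists_walkWeight_eq_wdist hw (hG v x)
  rw [← hp, ← hq, ← walkWeight_append]
  exact wdist_le_walkWeight hw _

end Metric

section Competition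

open scoped ENNReal

theorem mul_measure_pi_le_of_update {ι : Type*} [Fintype ι] [DecidableEq ι] {X : ι → Type*}
    [∀ i, MeasurableSpace (X i)] {μ : ∀ i, Measure (X i)} [∀ i, IsProbabilityMeasure (μ i)]
    (i : ι) {A B : Set (∀ i, X i)} (hA : MeasurableSet A) (hB : MeasurableSet B) {ε err : ℝ≥0∞}
    (h : ∀ ω, ε * μ i (Function.update ω i ⁻¹' A) ≤ μ i (Function.update ω i ⁻¹' B) + err) :
    ε * Measure.pi μ A ≤ Measure.pi μ B + err := by
  have hsec : ∀ ω {C : Set (∀ i, X i)}, MeasurableSet C →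
      ∫⁻ t, C.indicator 1 (Function.update ω i t) ∂μ i = μ i (Function.update ω i ⁻¹' C) :=
    fun ω C hC => lintegral_indicator_one (measurable_update ω hC)
  have hf : Measurable (A.indicator (1 : (∀ i, X i) → ℝ≥0∞)) := measurable_one.indicator hA
  have hg : Measurable (B.indicator (1 : (∀ i, X i) → ℝ≥0∞)) := measurable_one.indicator hB
  calc ε * Measure.pi μ A = ∫⁻ ω, ε * A.indicator 1 ω ∂Measure.pi μ := by
        rw [lintegral_const_mul _ hf, lintegral_indicator_one hA]
    _ ≤ ∫⁻ ω, B.indicator 1 ω + err ∂Measure.pi μ := by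
        refine lintegral_le_of_lmarginal_le {i} (hf.const_mul ε) (hg.add_const err) fun ω => ?_
        simp only [lmarginal_singleton]
        rw [lintegral_const_mul (f := fun t => A.indicator 1 (Function.update ω i t)) _
            (hf.comp (measurable_update ω)), hsec ω hA,
          lintegral_add_right _ measurable_const, hsec ω hB, lintegral_const, measure_univ, mul_one]
        exact h ω
    _ = Measure.pi μ B + err := by
        rw [lintegral_add_right _ measurable_const, lintegral_indicator_one hB, lintegral_const,
          measure_univ, mul_one]

variable {ι : Type*}

def WinsBy (a : ι → ℝ) (S : Finset ι) (c : ℝ) (ω : ι → ℝ) (x : ι) : Prop :=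
  ∀ z ∈ S, z ≠ x → ω z - a z + c < ω x - a x

lemma measurableSet_winsBy [Countable ι] (a : ι → ℝ) (S : Finset ι) (c : ℝ) (x : ι) :
    MeasurableSet {ω | WinsBy a S c ω x} :=
  measurableSet_setOfPred.2 (by unfold WinsBy; fun_prop)

lemma measurableSet_isMaxOn [Countable ι] (a : ι → ℝ) (S : Finset ι) (x : ι) :
    MeasurableSet {ω : ι → ℝ | IsMaxOn (fun z => ω z - a z) S x} :=
  measurableSet_setOfPred.2 (by simp only [isMaxOn_iff]; fun_prop)

variable {ν : Measure ℝ} [IsProbabilityMeasure ν] {ε err : ℝ≥0∞} {c : ℝ}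

lemma mul_measure_forall_le_le (hε : ε ≤ 1)
    (htail : ∀ s, ε * ν (Set.Ici s) ≤ ν (Set.Ioi (s + c)) + err) (T : Finset ι) (b : ι → ℝ) :
    ε * ν {t | ∀ z ∈ T, b z ≤ t} ≤ ν {t | ∀ z ∈ T, b z + c < t} + err := by
  rcases T.eq_empty_or_nonempty with rfl | hT
  · simpa using le_add_right hε
  have hIci : {t | ∀ z ∈ T, b z ≤ t} = Set.Ici (T.sup' hT b) := by
    ext t; simp [Finset.sup'_le_iff]
  have hIoi : {t | ∀ z ∈ T, b z + c < t} = Set.Ioi (T.sup' hT b + c) := by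
    ext t; simp [← lt_sub_iff_add_lt, Finset.sup'_lt_iff]
  rw [hIci, hIoi]
  exact htail _

variable [Fintype ι] [DecidableEq ι]

/-- Conditionally on the other coordinates, `x` is a weak winner iff `ω x` exceeds a threshold,
and a winner by `c` iff `ω x` exceeds that threshold plus `c`. -/
lemma mul_measure_isMaxOn_le (hε : ε ≤ 1)
    (htail : ∀ s, ε * ν (Set.Ici s) ≤ ν (Set.Ioi (s + c)) + err) (a : ι → ℝ) (S : Finset ι)
    (x : ι) :
    ε * Measure.pi (fun _ => ν) {ω | IsMaxOn (fun z => ω z - a z) S x} ≤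
      Measure.pi (fun _ => ν) {ω | WinsBy a S c ω x} + err := by
  refine mul_measure_pi_le_of_update x (measurableSet_isMaxOn a S x)
    (measurableSet_winsBy a S c x) fun ω => ?_
  convert mul_measure_forall_le_le hε htail (S.erase x) (fun z => ω z - a z + a x) using 3
  · ext t
    simp only [Set.mem_preimage, Set.mem_ofPred_eq, isMaxOn_iff, Finset.mem_coe, Finset.mem_erase]
    refine ⟨fun h z ⟨hzx, hz⟩ => ?_, fun h z hz => ?_⟩
    · have := h z hz
      rw [Function.update_of_ne hzx, Function.update_self] at this
      linarith
    · rcases eq_or_ne z x with rfl | hzx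
      · exact le_rfl
      · rw [Function.update_of_ne hzx, Function.update_self]
        linarith [h z ⟨hzx, hz⟩]
  · ext t
    simp only [Set.mem_preimage, Set.mem_ofPred_eq, WinsBy, Finset.mem_erase]
    refine ⟨fun h z ⟨hzx, hz⟩ => ?_, fun h z hz hzx => ?_⟩
    · have := h z hz hzx
      rw [Function.update_of_ne hzx, Function.update_self] at this
      linarith
    · rw [Function.update_of_ne hzx, Function.update_self]
      linarith [h z ⟨hzx, hz⟩]

/-- Multiplied by `ε`, the probability that `x` has the best score is paid for by the
probability that it wins by `c`; best scores exist, and winners by `c` are unique. -/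
theorem measure_compl_iUnion_winsBy_le (hε : ε ≤ 1) (hc : 0 ≤ c)
    (htail : ∀ s, ε * ν (Set.Ici s) ≤ ν (Set.Ioi (s + c)) + err) (a : ι → ℝ) {S : Finset ι}
    (hS : S.Nonempty) :
    Measure.pi (fun _ => ν) (⋃ x ∈ S, {ω | WinsBy a S c ω x})ᶜ ≤ 1 - ε + S.card * err := by
  set μ := Measure.pi fun _ : ι => ν
  have hcover : ⋃ x ∈ S, {ω : ι → ℝ | IsMaxOn (fun z => ω z - a z) S x} = Set.univ := by
    refine Set.eq_univ_of_forall fun ω => ?_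
    obtain ⟨x, hx, hmax⟩ := S.exists_max_image (fun z => ω z - a z) hS
    exact Set.mem_biUnion hx (isMaxOn_iff.2 hmax)
  have hdisj : (S : Set ι).PairwiseDisjoint fun x => {ω | WinsBy a S c ω x} := by
    intro x hx y hy hxy
    refine Set.disjoint_left.2 fun ω hωx hωy => ?_
    linarith [hωx y hy hxy.symm, hωy x hx hxy]
  have hwin : ε ≤ μ (⋃ x ∈ S, {ω | WinsBy a S c ω x}) + S.card * err :=
    calc ε = ε * μ Set.univ := by rw [measure_univ, mul_one]
      _ ≤ ε * ∑ x ∈ S, μ {ω | IsMaxOn (fun z => ω z - a z) S x} := by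
        gcongr
        rw [← hcover]
        exact measure_biUnion_finset_le _ _
      _ ≤ ∑ x ∈ S, (μ {ω | WinsBy a S c ω x} + err) := by
        rw [Finset.mul_sum]
        exact Finset.sum_le_sum fun x _ => mul_measure_isMaxOn_le hε htail a S x
      _ = μ (⋃ x ∈ S, {ω | WinsBy a S c ω x}) + S.card * err := by
        rw [Finset.sum_add_distrib, Finset.sum_const, nsmul_eq_mul,
          measure_biUnion_finset hdisj fun x _ => measurableSet_winsBy a S c x]
  rw [measure_compl (Finset.measurableSet_biUnion S fun x _ => measurableSet_winsBy a S c x)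
    (measure_ne_top _ _), measure_univ, tsub_le_iff_right]
  calc 1 ≤ 1 - ε + ε := le_tsub_add
    _ ≤ 1 - ε + (μ (⋃ x ∈ S, {ω | WinsBy a S c ω x}) + S.card * err) := by gcongr
    _ = 1 - ε + S.card * err + μ (⋃ x ∈ S, {ω | WinsBy a S c ω x}) := by ring

end Competition

section Partition

variable {V : Type*}

def Partition.ofFun {β : Type*} (f : V → β) : Partition V where
  cl v := {u | f u = f v}
  mem_cl _ := rfl
  cl_eq u v h := by change f u = f v at h; rw [h]

instance : MeasurableSpace (Partition V) := ⊤

instance : DiscreteMeasurableSpace (Partition V) := ⟨fun _ => trivial⟩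

instance [Finite V] : Finite (Partition V) :=
  Finite.of_injective Partition.cl fun P Q h => by cases P; cases Q; congr

end Partition

section Voronoi

variable {V : Type*} [LinearOrder V] {G : SimpleGraph V} {w : Sym2 V → ℝ} {N : Set V}
  {ω : V → ℝ} {Δ : ℝ}

noncomputable def centerKey (w : Sym2 V → ℝ) (G : SimpleGraph V) (ω : V → ℝ) (u x : V) : ℝ ×ₗ V :=
  toLex (wdist w G u x - ω x, x)

def IsCenter (w : Sym2 V → ℝ) (G : SimpleGraph V) (N : Set V) (ω : V → ℝ) (u x : V) : Prop :=
  x ∈ N ∧ ∀ z ∈ N, centerKey w G ω u x ≤ centerKey w G ω u z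

open Classical in
noncomputable def center (w : Sym2 V → ℝ) (G : SimpleGraph V) (N : Set V) (ω : V → ℝ) (u : V) :
    V :=
  if h : ∃ x, IsCenter w G N ω u x then h.choose else u

noncomputable def shiftedVoronoi (w : Sym2 V → ℝ) (G : SimpleGraph V) (N : Set V)
    (ω : V → ℝ) : Partition V :=
  Partition.ofFun (center w G N ω)

lemma IsCenter.sub_le (h : IsCenter w G N ω u x) {z : V} (hz : z ∈ N) :
    wdist w G u x - ω x ≤ wdist w G u z - ω z :=
  Prod.Lex.monotone_fst _ _ (h.2 z hz)

lemma IsCenter.unique (hx : IsCenter w G N ω u x) (hy : IsCenter w G N ω u y) : x = y :=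
  congrArg (fun k => (ofLex k).2) (le_antisymm (hx.2 y hy.1) (hy.2 x hx.1))

lemma exists_isCenter [Finite V] (hN : N.Nonempty) (u : V) : ∃ x, IsCenter w G N ω u x := by
  obtain ⟨x, hx, hmin⟩ := (Set.toFinite N).toFinset.exists_min_image (centerKey w G ω u)
    ((Set.Finite.toFinset_nonempty _).2 hN)
  exact ⟨x, by simpa using hx, fun z hz => hmin z (by simpa using hz)⟩

lemma isCenter_center [Finite V] (hN : N.Nonempty) (u : V) :
    IsCenter w G N ω u (center w G N ω u) := by
  have h := exists_isCenter (w := w) (G := G) (ω := ω) hN u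
  rw [center, dif_pos h]
  exact h.choose_spec

lemma center_eq_iff [Finite V] (hN : N.Nonempty) {u x : V} :
    center w G N ω u = x ↔ IsCenter w G N ω u x :=
  ⟨fun h => h ▸ isCenter_center hN u, (isCenter_center hN u).unique⟩

lemma toLex_le_toLex_of_sub_le {α : Type*} [LinearOrder α] {a b a' b' : ℝ} {x z : α}
    (h : toLex (a, x) ≤ toLex (b, z)) (h' : a' - a ≤ b' - b) : toLex (a', x) ≤ toLex (b', z) := by
  rw [Prod.Lex.toLex_le_toLex] at h ⊢
  rcases h with h | ⟨h, hxz⟩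
  · exact Or.inl (by linarith)
  · rcases (show a' ≤ b' by linarith).lt_or_eq with h'' | h''
    exacts [Or.inl h'', Or.inr ⟨h'', hxz⟩]

variable [Finite V]

/-- Shifted distances to every candidate drop by at most `d(u, y)` when moving from `u` to `y`,
and to the center by exactly that much when `y` lies on a shortest path to it. -/
lemma center_eq_of_mem_support (hw : ∀ e, 0 ≤ w e) (hG : G.Preconnected) (hN : N.Nonempty)
    {u : V} {p : G.Walk u (center w G N ω u)} (hp : walkWeight w p = wdist w G u (center w G N ω u))
    {y : V} (hy : y ∈ p.support) : center w G N ω y = center w G N ω u := by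
  have hx := isCenter_center (w := w) (G := G) (ω := ω) hN u
  have hsplit := wdist_add_wdist_le_of_mem_support hw hp hy
  refine (center_eq_iff hN).2 ⟨hx.1, fun z hz => toLex_le_toLex_of_sub_le (hx.2 z hz) ?_⟩
  linarith [wdist_triangle hw hG u y z]

lemma exists_walk_center (hw : ∀ e, 0 ≤ w e) (hG : G.Preconnected) (hN : N.Nonempty)
    (hcov : ∀ v, ∃ x ∈ N, wdist w G v x ≤ Δ) (hω : ∀ x, ω x ∈ Set.Icc 0 Δ) (u : V) :
    ∃ p : G.Walk u (center w G N ω u),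
      (∀ y ∈ p.support, center w G N ω y = center w G N ω u) ∧ walkWeight w p ≤ 2 * Δ := by
  obtain ⟨p, hp⟩ := exists_walkWeight_eq_wdist hw (hG u (center w G N ω u))
  refine ⟨p, fun y hy => center_eq_of_mem_support hw hG hN hp hy, ?_⟩
  obtain ⟨x, hxN, hx⟩ := hcov u
  have := (isCenter_center (w := w) (G := G) (ω := ω) hN u).sub_le hxN
  linarith [(hω x).1, (hω (center w G N ω u)).2]

theorem shiftedVoronoi_stronglyBounded (hw : ∀ e, 0 ≤ w e) (hG : G.Preconnected)
    (hcov : ∀ v, ∃ x ∈ N, wdist w G v x ≤ Δ) (hω : ∀ x, ω x ∈ Set.Icc 0 Δ) :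
    (shiftedVoronoi w G N ω).StronglyBounded w G (4 * Δ) := by
  rintro v ⟨u, hu⟩ ⟨u', hu'⟩
  change center w G N ω u = center w G N ω v at hu
  change center w G N ω u' = center w G N ω v at hu'
  have hN : N.Nonempty := let ⟨x, hx, _⟩ := hcov v; ⟨x, hx⟩
  obtain ⟨p, hps, hpw⟩ := exists_walk_center hw hG hN hcov hω u
  obtain ⟨p', hps', hpw'⟩ := exists_walk_center hw hG hN hcov hω u'
  let q := (p.copy rfl hu).append (p'.copy rfl hu').reverse
  have hq : ∀ y ∈ q.support, y ∈ (shiftedVoronoi w G N ω).cl v := by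
    intro y hy
    simp only [q, Walk.mem_support_append_iff, Walk.support_reverse, List.mem_reverse,
      Walk.support_copy] at hy
    rcases hy with hy | hy
    exacts [(hps y hy).trans hu, (hps' y hy).trans hu']
  refine ⟨q.induce _ hq, ?_⟩
  rw [walkWeightI_induce, walkWeight_append, walkWeight_reverse, walkWeight_copy, walkWeight_copy]
  linarith

/-- Moving from `v` to `u ∈ B(v, ρ)` changes every shifted distance by at most `ρ`, so a lead
of `2ρ` survives; centers outside `B(v, 3Δ)` are too far to compete. -/
lemma center_eq_of_winsBy (hw : ∀ e, 0 ≤ w e) (hG : G.Preconnected)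
    (hcov : ∀ v, ∃ x ∈ N, wdist w G v x ≤ Δ) (hω : ∀ x, ω x ∈ Set.Icc 0 Δ) {v : V} {ρ : ℝ}
    (hρ0 : 0 ≤ ρ) (hρ : 2 * ρ < Δ) {S : Finset V} (hS : (S : Set V) = ball w G v (3 * Δ) ∩ N)
    {x : V} (hx : x ∈ S) (hwin : WinsBy (wdist w G v) S (2 * ρ) ω x) {u : V}
    (hu : u ∈ ball w G v ρ) : center w G N ω u = x := by
  have hmemS : ∀ {z}, z ∈ S ↔ wdist w G v z ≤ 3 * Δ ∧ z ∈ N := by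
    intro z; rw [← Finset.mem_coe, hS]; rfl
  obtain ⟨y, hyN, hy⟩ := hcov v
  have hyS : y ∈ S := hmemS.2 ⟨by linarith [(hω y).1, (hω y).2], hyN⟩
  have hxv : wdist w G v x - ω x ≤ Δ := by
    rcases eq_or_ne y x with rfl | hyx
    · linarith [(hω y).1]
    · linarith [hwin y hyS hyx, (hω y).1]
  have hvu : wdist w G v u ≤ ρ := hu
  refine (center_eq_iff ⟨y, hyN⟩).2 ⟨(hmemS.1 hx).2, fun z hz => ?_⟩
  rcases eq_or_ne z x with rfl | hzx
  · exact le_rfl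
  refine (Prod.Lex.toLex_lt_toLex.2 (Or.inl ?_)).le
  have hux := wdist_triangle hw hG u v x
  have hvz := wdist_triangle hw hG v u z
  rw [wdist_comm hw hG u v] at hux
  by_cases hzS : z ∈ S
  · linarith [hwin z hzS hzx]
  · have : 3 * Δ < wdist w G v z := lt_of_not_ge fun h => hzS (hmemS.2 ⟨h, hz⟩)
    linarith [(hω z).2]

theorem ball_subset_cl_of_winsBy (hw : ∀ e, 0 ≤ w e) (hG : G.Preconnected)
    (hcov : ∀ v, ∃ x ∈ N, wdist w G v x ≤ Δ) (hω : ∀ x, ω x ∈ Set.Icc 0 Δ) {v : V} {ρ : ℝ}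
    (hρ0 : 0 ≤ ρ) (hρ : 2 * ρ < Δ) {S : Finset V} (hS : (S : Set V) = ball w G v (3 * Δ) ∩ N)
    {x : V} (hx : x ∈ S) (hwin : WinsBy (wdist w G v) S (2 * ρ) ω x) :
    ball w G v ρ ⊆ (shiftedVoronoi w G N ω).cl v := by
  have hv : v ∈ ball w G v ρ := by
    change wdist w G v v ≤ ρ
    rw [wdist_self hw]
    exact hρ0
  intro u hu
  exact (center_eq_of_winsBy hw hG hcov hω hρ0 hρ hS hx hwin hu).trans
    (center_eq_of_winsBy hw hG hcov hω hρ0 hρ hS hx hwin hv).symm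

lemma measurableSet_isCenter (u x : V) : MeasurableSet {ω : V → ℝ | IsCenter w G N ω u x} :=
  measurableSet_setOfPred.2 (by simp only [IsCenter, centerKey, Prod.Lex.toLex_le_toLex]; fun_prop)

theorem measurable_shiftedVoronoi (hN : N.Nonempty) : Measurable (shiftedVoronoi w G N) := by
  refine measurable_to_countable' fun P => ?_
  have : shiftedVoronoi w G N ⁻¹' {P} =
      ⋃ c ∈ {c : V → V | Partition.ofFun c = P}, ⋂ u, {ω | IsCenter w G N ω u (c u)} := by
    ext ω
    simp only [Set.mem_preimage, Set.mem_singleton_iff, Set.mem_iUnion, Set.mem_iInter,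
      Set.mem_ofPred_eq, ← center_eq_iff hN, exists_prop]
    exact ⟨fun h => ⟨_, h, fun _ => rfl⟩,
      fun ⟨c, hc, h⟩ => (congrArg Partition.ofFun (funext h)).trans hc⟩
  rw [this]
  exact MeasurableSet.biUnion (Set.to_countable _) fun c _ =>
    MeasurableSet.iInter fun u => measurableSet_isCenter u (c u)

end Voronoi

section TruncatedExponential

open Real Set Filter Topology
open scoped ENNReal

variable {lam Δ : ℝ} (hlam : 0 < lam) (hΔ : 0 < Δ)

/-- The CDF of the exponential distribution of rate `lam / Δ` conditioned on `[0, Δ]`. -/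
noncomputable def truncExpCDF : StieltjesFunction ℝ where
  toFun t := (1 - exp (-lam * projIcc 0 Δ hΔ.le t / Δ)) / (1 - exp (-lam))
  mono' a b hab := by
    have hab' : (projIcc 0 Δ hΔ.le a : ℝ) ≤ projIcc 0 Δ hΔ.le b := monotone_projIcc hΔ.le hab
    refine div_le_div_of_nonneg_right (sub_le_sub_left (exp_le_exp.2 ?_) 1)
      (sub_nonneg.2 (exp_le_one_iff.2 (by linarith)))
    exact div_le_div_of_nonneg_right (by nlinarith) hΔ.le
  right_continuous' _ := by fun_prop

noncomputable def truncExp : Measure ℝ := (truncExpCDF hlam hΔ).measure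

lemma truncExpCDF_apply (t : ℝ) :
    truncExpCDF hlam hΔ t = (1 - exp (-lam * projIcc 0 Δ hΔ.le t / Δ)) / (1 - exp (-lam)) :=
  rfl

lemma continuous_truncExpCDF : Continuous (truncExpCDF hlam hΔ) := by
  change Continuous fun t => (1 - exp (-lam * projIcc 0 Δ hΔ.le t / Δ)) / (1 - exp (-lam))
  fun_prop

lemma truncExpCDF_of_nonpos {t : ℝ} (ht : t ≤ 0) : truncExpCDF hlam hΔ t = 0 := by
  simp [truncExpCDF_apply, projIcc_of_le_left _ ht]

lemma truncExpCDF_of_le {t : ℝ} (ht : Δ ≤ t) : truncExpCDF hlam hΔ t = 1 := by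
  rw [truncExpCDF_apply, projIcc_of_right_le _ ht, mul_div_cancel_right₀ _ hΔ.ne']
  exact div_self (sub_pos.2 (exp_lt_one_iff.2 (neg_lt_zero.2 hlam))).ne'

lemma truncExpCDF_le_one (t : ℝ) : truncExpCDF hlam hΔ t ≤ 1 :=
  ((truncExpCDF hlam hΔ).mono (le_max_left t Δ)).trans_eq
    (truncExpCDF_of_le hlam hΔ (le_max_right t Δ))

lemma tendsto_truncExpCDF_atBot : Tendsto (truncExpCDF hlam hΔ) atBot (𝓝 0) :=
  tendsto_const_nhds.congr' <|
    (eventually_le_atBot 0).mono fun _ ht => (truncExpCDF_of_nonpos hlam hΔ ht).symm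

lemma tendsto_truncExpCDF_atTop : Tendsto (truncExpCDF hlam hΔ) atTop (𝓝 1) :=
  tendsto_const_nhds.congr' <|
    (eventually_ge_atTop Δ).mono fun _ ht => (truncExpCDF_of_le hlam hΔ ht).symm

instance : IsProbabilityMeasure (truncExp hlam hΔ) :=
  (truncExpCDF hlam hΔ).isProbabilityMeasure (tendsto_truncExpCDF_atBot hlam hΔ)
    (tendsto_truncExpCDF_atTop hlam hΔ)

lemma leftLim_truncExpCDF (t : ℝ) :
    Function.leftLim (truncExpCDF hlam hΔ) t = truncExpCDF hlam hΔ t :=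
  leftLim_eq_of_tendsto (continuous_truncExpCDF hlam hΔ).continuousAt.continuousWithinAt

lemma truncExp_Ioi (s : ℝ) :
    truncExp hlam hΔ (Ioi s) = ENNReal.ofReal (1 - truncExpCDF hlam hΔ s) :=
  (truncExpCDF hlam hΔ).measure_Ioi (tendsto_truncExpCDF_atTop hlam hΔ) s

lemma truncExp_Ici (s : ℝ) :
    truncExp hlam hΔ (Ici s) = ENNReal.ofReal (1 - truncExpCDF hlam hΔ s) := by
  rw [truncExp, (truncExpCDF hlam hΔ).measure_Ici (tendsto_truncExpCDF_atTop hlam hΔ),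
    leftLim_truncExpCDF]

lemma ae_truncExp_mem_Icc : ∀ᵐ t ∂truncExp hlam hΔ, t ∈ Icc 0 Δ := by
  have h0 : truncExp hlam hΔ (Iio 0) = 0 := by
    rw [truncExp, (truncExpCDF hlam hΔ).measure_Iio (tendsto_truncExpCDF_atBot hlam hΔ),
      leftLim_truncExpCDF, truncExpCDF_of_nonpos hlam hΔ le_rfl, sub_zero, ENNReal.ofReal_zero]
  have hΔ' : truncExp hlam hΔ (Ioi Δ) = 0 := by
    rw [truncExp_Ioi, truncExpCDF_of_le hlam hΔ le_rfl, sub_self, ENNReal.ofReal_zero]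
  refine measure_mono_null (fun t ht => ?_) (measure_union_null h0 hΔ')
  by_contra h
  simp only [mem_union, mem_Iio, mem_Ioi, not_or, not_lt] at h
  exact ht h

/-- Memorylessness of the exponential distribution, up to the error caused by the truncation. -/
lemma mul_truncExp_Ici_le {c : ℝ} (hc : 0 ≤ c) (s : ℝ) :
    ENNReal.ofReal (exp (-(c * lam))) * truncExp hlam hΔ (Ici s) ≤
      truncExp hlam hΔ (Ioi (s + c * Δ)) +
        ENNReal.ofReal ((1 - exp (-(c * lam))) / (exp lam - 1)) := by
  have herr : 0 ≤ (1 - exp (-(c * lam))) / (exp lam - 1) :=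
    div_nonneg (sub_nonneg.2 (exp_le_one_iff.2 (by nlinarith)))
      (sub_nonneg.2 (one_le_exp hlam.le))
  rw [truncExp_Ici, truncExp_Ioi, ← ENNReal.ofReal_mul (exp_pos _).le,
    ← ENNReal.ofReal_add (sub_nonneg.2 (truncExpCDF_le_one hlam hΔ _)) herr]
  refine ENNReal.ofReal_le_ofReal ?_
  set a : ℝ := (projIcc 0 Δ hΔ.le s : ℝ)
  set b : ℝ := (projIcc 0 Δ hΔ.le (s + c * Δ) : ℝ)
  have hba : lam * b / Δ ≤ c * lam + lam * a / Δ := by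
    have := abs_projIcc_sub_projIcc hΔ.le (c := s + c * Δ) (d := s)
    rw [add_sub_cancel_left, abs_of_nonneg (mul_nonneg hc hΔ.le)] at this
    rw [div_le_iff₀ hΔ, add_mul, div_mul_cancel₀ _ hΔ.ne']
    nlinarith [mul_le_mul_of_nonneg_left ((le_abs_self _).trans this) hlam.le]
  have key : exp (-(c * lam)) * exp (-lam * a / Δ) ≤ exp (-lam * b / Δ) := by
    rw [← exp_add, neg_mul, neg_div, neg_mul, neg_div]
    exact exp_le_exp.2 (by linarith)
  have hexp : exp lam - 1 = (1 - exp (-lam)) / exp (-lam) := by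
    rw [exp_neg]; field_simp
  rw [truncExpCDF_apply, truncExpCDF_apply, hexp, ← sub_nonneg]
  have : 1 - (1 - exp (-lam * b / Δ)) / (1 - exp (-lam)) +
      (1 - exp (-(c * lam))) / ((1 - exp (-lam)) / exp (-lam)) -
      exp (-(c * lam)) * (1 - (1 - exp (-lam * a / Δ)) / (1 - exp (-lam))) =
      (exp (-lam * b / Δ) - exp (-(c * lam)) * exp (-lam * a / Δ)) / (1 - exp (-lam)) := by
    have hD : 1 - exp (-lam) ≠ 0 := (sub_pos.2 (exp_lt_one_iff.2 (neg_lt_zero.2 hlam))).ne'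
    generalize exp (-lam) = q at hD
    field_simp
    ring
  rw [this]
  exact div_nonneg (by linarith) (sub_nonneg.2 (exp_le_one_iff.2 (by linarith)))

end TruncatedExponential

section Law

open Set
open scoped ENNReal

lemma exists_pmf_toOuterMeasure_eq {Ω α : Type*} [MeasurableSpace Ω] [MeasurableSpace α]
    [Countable α] [DiscreteMeasurableSpace α] (μ : Measure Ω) [IsProbabilityMeasure μ]
    {f : Ω → α} (hf : Measurable f) : ∃ D : PMF α, ∀ s, D.toOuterMeasure s = μ (f ⁻¹' s) := by
  have := Measure.isProbabilityMeasure_map (μ := μ) hf.aemeasurable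
  refine ⟨(μ.map f).toPMF, fun s => ?_⟩
  rw [← PMF.toMeasure_apply_eq_toOuterMeasure_apply _ (.of_discrete), Measure.toPMF_toMeasure,
    Measure.map_apply hf (.of_discrete)]

lemma one_sub_ofReal_add_natCast_mul_ofReal {ε d : ℝ} (hε0 : 0 ≤ ε) (hε1 : ε ≤ 1) (hd : 0 ≤ d)
    (n : ℕ) :
    1 - ENNReal.ofReal ε + n * ENNReal.ofReal ((1 - ε) / d) =
      ENNReal.ofReal ((1 - ε) * (1 + n / d)) := by
  rw [← ENNReal.ofReal_one, ← ENNReal.ofReal_sub _ hε0, ← ENNReal.ofReal_natCast,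
    ← ENNReal.ofReal_mul n.cast_nonneg, ← ENNReal.ofReal_add (sub_nonneg.2 hε1)
      (mul_nonneg n.cast_nonneg (div_nonneg (sub_nonneg.2 hε1) hd))]
  congr 1
  ring

variable {V : Type*} [LinearOrder V] [Fintype V] {G : SimpleGraph V} {w : Sym2 V → ℝ}
  {N : Set V} {Δ : ℝ} {ν : Measure ℝ}

theorem measure_not_stronglyBounded (hw : ∀ e, 0 ≤ w e) (hG : G.Preconnected)
    (hcov : ∀ v, ∃ x ∈ N, wdist w G v x ≤ Δ)
    (hbox : ∀ᵐ ω ∂Measure.pi (fun _ : V => ν), ∀ x, ω x ∈ Icc 0 Δ) :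
    Measure.pi (fun _ : V => ν)
      (shiftedVoronoi w G N ⁻¹' {P | ¬ P.StronglyBounded w G (4 * Δ)}) = 0 := by
  rw [measure_eq_zero_iff_ae_notMem]
  filter_upwards [hbox] with ω hω
  exact not_not.2 (shiftedVoronoi_stronglyBounded hw hG hcov hω)

theorem measure_ball_not_subset_cl_le [IsProbabilityMeasure ν] (hw : ∀ e, 0 ≤ w e)
    (hG : G.Preconnected) (hcov : ∀ v, ∃ x ∈ N, wdist w G v x ≤ Δ)
    (hbox : ∀ᵐ ω ∂Measure.pi (fun _ : V => ν), ∀ x, ω x ∈ Icc 0 Δ) {ε err : ℝ≥0∞} (hε : ε ≤ 1)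
    {ρ : ℝ} (hρ0 : 0 ≤ ρ) (hρ : 2 * ρ < Δ)
    (htail : ∀ s, ε * ν (Ici s) ≤ ν (Ioi (s + 2 * ρ)) + err) (v : V) :
    Measure.pi (fun _ : V => ν) (shiftedVoronoi w G N ⁻¹' {P | ¬ ball w G v ρ ⊆ P.cl v}) ≤
      1 - ε + (ball w G v (3 * Δ) ∩ N).ncard * err := by
  classical
  set S := (toFinite (ball w G v (3 * Δ) ∩ N)).toFinset
  have hS : (S : Set V) = ball w G v (3 * Δ) ∩ N := Finite.coe_toFinset _
  have hSne : S.Nonempty := by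
    obtain ⟨x, hxN, hx⟩ := hcov v
    refine ⟨x, ?_⟩
    rw [← Finset.mem_coe, hS]
    exact ⟨show wdist w G v x ≤ 3 * Δ by linarith, hxN⟩
  rw [ncard_eq_toFinset_card _ (toFinite _)]
  refine le_trans (measure_mono_ae (hbox.mono fun ω hω hcut => ?_))
    (measure_compl_iUnion_winsBy_le hε (by linarith) htail (wdist w G v) hSne)
  intro hwin
  obtain ⟨x, hx, hwin⟩ := mem_iUnion₂.1 hwin
  exact hcut (ball_subset_cl_of_winsBy hw hG hcov hω hρ0 hρ hS hx hwin)

end Law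

end Pad

/-- (Generalized version of the main technical theorem.) Given centers `N`
with covering radius `Δ`, setting `τ_v = |B_G(v,3Δ) ∩ N|`, for every `λ ≥ 2` there is a
distribution over strongly `4Δ`-bounded partitions in which, for `0 < γ < 1/4`, the ball
`B_G(v, γΔ)` is cut with probability at most `(1 - e^{-2γλ})·(1 + τ_v/(e^λ - 1))`. -/
theorem strongly_padded_decomposition_local
    (V : Type) [Fintype V] (G : SimpleGraph V) (hG : G.Connected)
    (w : Sym2 V → ℝ) (hw : ∀ e, 0 ≤ w e)
    (Δ : ℝ) (hΔ : 0 < Δ)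
    (N : Set V)
    (hcov : ∀ v : V, ∃ x ∈ N, Pad.wdist w G v x ≤ Δ)
    (lam : ℝ) (hlam : 2 ≤ lam) :
    ∃ D : PMF (Pad.Partition V),
      (∀ P ∈ D.support, Pad.Partition.StronglyBounded w G P (4 * Δ)) ∧
      ∀ (v : V) (γ : ℝ), 0 < γ → γ < 1 / 4 →
        D.toOuterMeasure {P | ¬ Pad.ball w G v (γ * Δ) ⊆ P.cl v} ≤
          ENNReal.ofReal ((1 - Real.exp (-(2 * γ * lam))) *
            (1 + ((Pad.ball w G v (3 * Δ) ∩ N).ncard : ℝ) / (Real.exp lam - 1))) := by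
  let _ : LinearOrder V := LinearOrder.lift' _ (Fintype.equivFin V).injective
  have hlam0 : 0 < lam := by linarith
  have hN : N.Nonempty := let ⟨x, hx, _⟩ := hcov hG.nonempty.some; ⟨x, hx⟩
  set μ := Measure.pi fun _ : V => Pad.truncExp hlam0 hΔ
  have hbox : ∀ᵐ ω ∂μ, ∀ x, ω x ∈ Set.Icc 0 Δ :=
    ae_all_iff.2 fun _ => Measure.tendsto_eval_ae_ae.eventually (Pad.ae_truncExp_mem_Icc hlam0 hΔ)
  obtain ⟨D, hD⟩ :=
    Pad.exists_pmf_toOuterMeasure_eq μ (Pad.measurable_shiftedVoronoi (w := w) (G := G) hN)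
  refine ⟨D, fun P hP => ?_, fun v γ hγ hγ' => ?_⟩
  · by_contra hPb
    have := (hD _).trans (Pad.measure_not_stronglyBounded hw hG.preconnected hcov hbox)
    exact (D.toOuterMeasure_apply_eq_zero_iff _).1 this |>.notMem_of_mem_left hP hPb
  have hε : Real.exp (-(2 * γ * lam)) ≤ 1 := Real.exp_le_one_iff.2 (by nlinarith)
  rw [hD, ← Pad.one_sub_ofReal_add_natCast_mul_ofReal (Real.exp_pos _).le hε
    (sub_pos.2 (Real.one_lt_exp_iff.2 hlam0)).le]
  refine Pad.measure_ball_not_subset_cl_le hw hG.preconnected hcov hbox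
    (ENNReal.ofReal_le_one.2 hε) (by positivity) (by nlinarith) (fun s => ?_) v
  simpa only [mul_assoc] using Pad.mul_truncExp_Ici_le hlam0 hΔ (by positivity : 0 ≤ 2 * γ) s
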